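/- Let x_1,...,x_n ∈ ℝ^p with more than G distinct points (#{x_1,...,x_n} > G). Let (θ_m) be a sequence of Gaussian mixture parameters with G components satisfying the eigenratio constraint λ_max(θ_m)/λ_min(θ_m) ≤ γ, and suppose some covariance eigenvalue λ_{k,j,m} ↘ 0 as m → ∞. Then the Gaussian-mixture log-likelihood l_n(θ_m) = (1/n) Σ_i log(Σ_{j=1}^G π_j φ(x_i; μ_{j,m}, Σ_{j,m})) tends to -∞. -/

import Mathlib

/-!
Let `a` be the smallest covariance eigenvalue over all components. The eigenratio constraint
traps every covariance eigenvalue in `[a, γ a]`, so each component density is at most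
`(2π a)^(-p/2) exp(-|x - μ|² / (2 γ a))`. Since there are more than `G` distinct data points,
pigeonhole gives an `ε > 0`, independent of the parameters, such that whatever the `G` means are,
some data point lies at distance at least `ε` from all of them. That point contributes at most
`-(p/2) log(2π a) - ε² / (2 γ a)` to the sum and every other one at most `-(p/2) log(2π a)`, so
`l_n ≤ const - (p/2) log a - C / a`, which tends to `-∞` because `a ≤ λ_{k,j,m} → 0`.
-/

open Real Matrix Filter Topology MeasureTheory

/-- smallest eigenvalue (infimum of the spectrum) of a real matrix -/
noncomputable def lamMin {p : ℕ} (A : Matrix (Fin p) (Fin p) ℝ) : ℝ := sInf (spectrum ℝ A)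

/-- largest eigenvalue (supremum of the spectrum) of a real matrix -/
noncomputable def lamMax {p : ℕ} (A : Matrix (Fin p) (Fin p) ℝ) : ℝ := sSup (spectrum ℝ A)

/-- The `p`-dimensional Gaussian density with mean `μ` and covariance matrix `S`. -/
noncomputable def gauss {p : ℕ} (x μ : Fin p → ℝ) (S : Matrix (Fin p) (Fin p) ℝ) : ℝ :=
  (2 * π) ^ (-(p : ℝ) / 2) * S.det ^ (-(1 : ℝ) / 2) *
    Real.exp (-((x - μ) ⬝ᵥ (S⁻¹ *ᵥ (x - μ))) / 2)

namespace Matrix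

variable {n : Type*} [Fintype n] [DecidableEq n]

theorem IsHermitian.pow_card_le_det {A : Matrix n n ℝ} (hA : A.IsHermitian) {a : ℝ} (ha : 0 ≤ a)
    (h : ∀ r ∈ spectrum ℝ A, a ≤ r) : a ^ Fintype.card n ≤ A.det := by
  rw [hA.det_eq_prod_eigenvalues, ← Finset.card_univ, ← Finset.prod_const]
  exact Finset.prod_le_prod (fun _ _ => ha) fun k _ => h _ (hA.eigenvalues_mem_spectrum_real k)

theorem PosDef.dotProduct_div_le_dotProduct_inv_mulVec {A : Matrix n n ℝ} (hA : A.PosDef) {c : ℝ}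
    (h : ∀ r ∈ spectrum ℝ A, r ≤ c) (v : n → ℝ) : v ⬝ᵥ v / c ≤ v ⬝ᵥ (A⁻¹ *ᵥ v) := by
  -- `A⁻¹ - c⁻¹` is positive semidefinite: its spectrum is `{s - c⁻¹ | s⁻¹ ∈ σ(A)}`.
  set u := hA.isUnit.unit
  have hu : (↑u⁻¹ : Matrix n n ℝ) = A⁻¹ := by rw [coe_units_inv]; rfl
  have hB : (A⁻¹ - algebraMap ℝ _ c⁻¹).PosSemidef := by
    refine posSemidef_iff_isHermitian_and_spectrum_nonneg.mpr
      ⟨hA.isHermitian.inv.sub (by rw [algebraMap_eq_diagonal]; exact isHermitian_diagonal _), ?_⟩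
    rw [← spectrum.sub_singleton_eq]
    rintro _ ⟨s, hs, _, rfl, rfl⟩
    have hs_pos : 0 < s := by
      rw [hA.inv.isHermitian.spectrum_real_eq_range_eigenvalues] at hs
      obtain ⟨k, rfl⟩ := hs
      exact hA.inv.eigenvalues_pos k
    rw [← hu, ← spectrum.inv₀_mem_iff] at hs
    exact sub_nonneg.mpr (inv_le_of_inv_le₀ hs_pos (h _ hs))
  have := hB.dotProduct_mulVec_nonneg v
  simp only [star_trivial, sub_mulVec, Algebra.algebraMap_eq_smul_one, smul_mulVec, one_mulVec,
    dotProduct_sub, dotProduct_smul, smul_eq_mul] at this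
  rw [div_eq_inv_mul]
  linarith

end Matrix

section Spectrum

variable {p : ℕ} {A : Matrix (Fin p) (Fin p) ℝ} {r : ℝ}

theorem lamMin_le_of_mem_spectrum (h : r ∈ spectrum ℝ A) : lamMin A ≤ r :=
  csInf_le finite_real_spectrum.bddBelow h

theorem le_lamMax_of_mem_spectrum (h : r ∈ spectrum ℝ A) : r ≤ lamMax A :=
  le_csSup finite_real_spectrum.bddAbove h

theorem Matrix.PosDef.lamMin_pos (hA : A.PosDef) (hp : 0 < p) : 0 < lamMin A := by
  have : Nonempty (Fin p) := ⟨⟨0, hp⟩⟩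
  rw [lamMin, hA.isHermitian.spectrum_real_eq_range_eigenvalues]
  obtain ⟨k, hk⟩ := (Set.range_nonempty _).csInf_mem (Set.finite_range hA.isHermitian.eigenvalues)
  rw [← hk]
  exact hA.eigenvalues_pos k

end Spectrum

theorem sq_norm_le_dotProduct_self {n : Type*} [Fintype n] (v : n → ℝ) : ‖v‖ ^ 2 ≤ v ⬝ᵥ v := by
  have hnonneg : 0 ≤ v ⬝ᵥ v := Finset.sum_nonneg fun k _ => mul_self_nonneg (v k)
  suffices ‖v‖ ≤ √(v ⬝ᵥ v) by
    simpa [Real.sq_sqrt hnonneg] using pow_le_pow_left₀ (norm_nonneg v) this 2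
  refine (pi_norm_le_iff_of_nonneg (Real.sqrt_nonneg _)).mpr fun k => ?_
  refine Real.abs_le_sqrt ?_
  rw [sq, dotProduct]
  exact Finset.single_le_sum (f := fun k => v k * v k) (fun k _ => mul_self_nonneg (v k))
    (Finset.mem_univ k)

theorem exists_pos_forall_exists_le_dist {E ι : Type*} [MetricSpace E] [Finite ι] {s : Set E}
    (h : Nat.card ι < s.ncard) : ∃ ε > 0, ∀ c : ι → E, ∃ a ∈ s, ∀ j, ε ≤ dist a (c j) := by
  have hs : s.Finite := Set.finite_of_ncard_pos (by omega)
  have hsep : ∀ᶠ ε in 𝓝[>] (0 : ℝ), ∀ a ∈ s, ∀ b ∈ s, a ≠ b → ε + ε ≤ dist a b := by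
    refine (Filter.eventually_all_finite hs).mpr fun a _ => (Filter.eventually_all_finite hs).mpr
      fun b _ => ?_
    rcases eq_or_ne a b with rfl | hab
    · exact .of_forall fun _ h => (h rfl).elim
    filter_upwards [Ioo_mem_nhdsGT (half_pos (dist_pos.mpr hab))] with ε hε _
    linarith [hε.2]
  obtain ⟨ε, hε_sep, hε_pos⟩ := (hsep.and self_mem_nhdsWithin).exists
  refine ⟨ε, hε_pos, fun c => ?_⟩
  by_contra! hnear
  choose f hf using fun a : s => hnear a a.2
  have hinj : Function.Injective f := fun a b hab => by
    by_contra hne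
    linarith [hε_sep a a.2 b b.2 (Subtype.coe_ne_coe.mpr hne),
      dist_triangle_right (a : E) b (c (f b)), hab ▸ hf a, hf b]
  exact (Nat.card_le_card_of_injective f hinj).not_gt h

section Gaussian

variable {p : ℕ} {x μ : Fin p → ℝ} {S : Matrix (Fin p) (Fin p) ℝ}

theorem gauss_pos (hS : S.PosDef) : 0 < gauss x μ S := by
  unfold gauss
  have := hS.det_pos
  positivity

theorem gauss_le (hS : S.PosDef) {a c t : ℝ} (ha : 0 < a) (hc : 0 < c)
    (hlo : ∀ r ∈ spectrum ℝ S, a ≤ r) (hhi : ∀ r ∈ spectrum ℝ S, r ≤ c)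
    (ht : t ≤ (x - μ) ⬝ᵥ (x - μ)) :
    gauss x μ S ≤ (2 * π * a) ^ (-(p : ℝ) / 2) * Real.exp (-(t / (2 * c))) := by
  have hdet : S.det ^ (-(1 : ℝ) / 2) ≤ a ^ (-(p : ℝ) / 2) := by
    have := hS.isHermitian.pow_card_le_det ha.le hlo
    rw [Fintype.card_fin] at this
    calc S.det ^ (-(1 : ℝ) / 2) ≤ (a ^ p) ^ (-(1 : ℝ) / 2) :=
          Real.rpow_le_rpow_of_nonpos (by positivity) this (by norm_num)
      _ = a ^ (-(p : ℝ) / 2) := by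
          rw [← Real.rpow_natCast, ← Real.rpow_mul ha.le]
          ring_nf
  have hquad : t / c ≤ (x - μ) ⬝ᵥ (S⁻¹ *ᵥ (x - μ)) :=
    (div_le_div_of_nonneg_right ht hc.le).trans
      (hS.dotProduct_div_le_dotProduct_inv_mulVec hhi _)
  rw [Real.mul_rpow (by positivity) ha.le, gauss]
  gcongr
  rw [mul_comm 2 c, ← div_div]
  linarith

end Gaussian

noncomputable def mixtureDensity {p : ℕ} {ι : Type*} [Fintype ι] (w : ι → ℝ) (μ : ι → Fin p → ℝ)
    (S : ι → Matrix (Fin p) (Fin p) ℝ) (x : Fin p → ℝ) : ℝ :=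
  ∑ j, w j * gauss x (μ j) (S j)

section Mixture

variable {p : ℕ} {ι : Type*} [Fintype ι] {w : ι → ℝ} {μ : ι → Fin p → ℝ}
  {S : ι → Matrix (Fin p) (Fin p) ℝ}

theorem mixtureDensity_pos (hw : ∀ j, 0 ≤ w j) (hsum : ∑ j, w j = 1) (hS : ∀ j, (S j).PosDef)
    (x : Fin p → ℝ) : 0 < mixtureDensity w μ S x := by
  obtain ⟨j, -, hj⟩ : ∃ j ∈ Finset.univ, (0 : ℝ) < w j :=
    Finset.exists_lt_of_sum_lt (by simp [hsum])
  exact Finset.sum_pos' (fun j _ => mul_nonneg (hw j) (gauss_pos (hS j)).le)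
    ⟨j, Finset.mem_univ j, mul_pos hj (gauss_pos (hS j))⟩

theorem mixtureDensity_le (hw : ∀ j, 0 ≤ w j) (hsum : ∑ j, w j = 1) (hS : ∀ j, (S j).PosDef)
    {a c t : ℝ} (ha : 0 < a) (hc : 0 < c) (hlo : ∀ j, ∀ r ∈ spectrum ℝ (S j), a ≤ r)
    (hhi : ∀ j, ∀ r ∈ spectrum ℝ (S j), r ≤ c) {x : Fin p → ℝ}
    (ht : ∀ j, t ≤ (x - μ j) ⬝ᵥ (x - μ j)) :
    mixtureDensity w μ S x ≤ (2 * π * a) ^ (-(p : ℝ) / 2) * Real.exp (-(t / (2 * c))) := by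
  calc mixtureDensity w μ S x
      ≤ ∑ j, w j * ((2 * π * a) ^ (-(p : ℝ) / 2) * Real.exp (-(t / (2 * c)))) :=
        Finset.sum_le_sum fun j _ => mul_le_mul_of_nonneg_left
          (gauss_le (hS j) ha hc (hlo j) (hhi j) (ht j)) (hw j)
    _ = _ := by rw [← Finset.sum_mul, hsum, one_mul]

end Mixture

theorem sum_log_le_of_le {κ : Type*} [Fintype κ] {f : κ → ℝ} (hf : ∀ i, 0 < f i) {A t : ℝ}
    (hA : ∀ i, f i ≤ A) {i₀ : κ} (h₀ : f i₀ ≤ A * Real.exp (-t)) :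
    ∑ i, Real.log (f i) ≤ Fintype.card κ * Real.log A - t := by
  classical
  have hA_pos : 0 < A := (hf i₀).trans_le (hA i₀)
  calc ∑ i, Real.log (f i) ≤ ∑ i, (Real.log A - if i = i₀ then t else 0) := by
        refine Finset.sum_le_sum fun i _ => ?_
        split_ifs with hi
        · subst hi
          have := Real.log_le_log (hf i) h₀
          rwa [Real.log_mul hA_pos.ne' (Real.exp_ne_zero _), Real.log_exp, ← sub_eq_add_neg]
            at this
        · simpa using Real.log_le_log (hf i) (hA i)
    _ = Fintype.card κ * Real.log A - t := by simp [Finset.sum_sub_distrib]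

theorem Real.tendsto_mul_log_sub_div_nhdsGT_zero (C : ℝ) {D : ℝ} (hD : 0 < D) :
    Tendsto (fun s => C * Real.log s - D / s) (𝓝[>] 0) atBot := by
  -- `C log s - D / s = s⁻¹ (C s log s - D)` with `s log s → 0`.
  have hlim : Tendsto (fun s => C * (Real.log s * s) - D) (𝓝[>] 0) (𝓝 (C * 0 - D)) := by
    simpa using ((tendsto_log_mul_rpow_nhdsGT_zero one_pos).const_mul C).sub_const D
  refine (tendsto_inv_nhdsGT_zero.atTop_mul_neg (by linarith) hlim).congr' ?_
  filter_upwards [self_mem_nhdsWithin] with s (hs : 0 < s)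
  field_simp

noncomputable def mixtureLogLik {n p : ℕ} {ι : Type*} [Fintype ι] (w : ι → ℝ)
    (μ : ι → Fin p → ℝ) (S : ι → Matrix (Fin p) (Fin p) ℝ) (x : Fin n → Fin p → ℝ) : ℝ :=
  (1 / n : ℝ) * ∑ i, Real.log (mixtureDensity w μ S (x i))

theorem mixtureLogLik_le {n p : ℕ} {ι : Type*} [Fintype ι] {w : ι → ℝ} {μ : ι → Fin p → ℝ}
    {S : ι → Matrix (Fin p) (Fin p) ℝ} (hw : ∀ j, 0 ≤ w j) (hsum : ∑ j, w j = 1)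
    (hS : ∀ j, (S j).PosDef) (hn : 0 < n) {a γ ε : ℝ} (ha : 0 < a) (hγ : 0 < γ)
    (hlo : ∀ j, ∀ r ∈ spectrum ℝ (S j), a ≤ r) (hhi : ∀ j, ∀ r ∈ spectrum ℝ (S j), r ≤ γ * a)
    (hε : 0 ≤ ε) {x : Fin n → Fin p → ℝ} {i₀ : Fin n} (hfar : ∀ j, ε ≤ dist (x i₀) (μ j)) :
    mixtureLogLik w μ S x ≤
      -(p / 2) * Real.log (2 * π) + (-(p / 2) * Real.log a - ε ^ 2 / (2 * γ * n) / a) := by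
  have hc : 0 < γ * a := mul_pos hγ ha
  have hbound (i : Fin n) :=
    mixtureDensity_le hw hsum hS ha hc hlo hhi (μ := μ) (x := x i) (t := 0)
      fun j => (sq_nonneg _).trans (sq_norm_le_dotProduct_self _)
  have hbound_far := mixtureDensity_le hw hsum hS ha hc hlo hhi (μ := μ) (x := x i₀) (t := ε ^ 2)
    fun j => (pow_le_pow_left₀ hε (hfar j) 2).trans
      (by rw [dist_eq_norm]; exact sq_norm_le_dotProduct_self _)
  simp only [zero_div, neg_zero, Real.exp_zero, mul_one] at hbound
  have hsum_log := sum_log_le_of_le (mixtureDensity_pos hw hsum hS <| x ·) hbound hbound_far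
  rw [Fintype.card_fin, Real.log_rpow (by positivity),
    Real.log_mul (by positivity) ha.ne'] at hsum_log
  calc mixtureLogLik w μ S x
      ≤ (1 / n : ℝ) * (n * (-(p : ℝ) / 2 * (Real.log (2 * π) + Real.log a)) -
          ε ^ 2 / (2 * (γ * a))) := by
        unfold mixtureLogLik
        gcongr
    _ = _ := by
        field_simp
        ring

/-- Lemma 1 of the paper: with more than G distinct data points, if along a
sequence of G-component Gaussian mixture parameters satisfying the eigenratio constraint
some covariance eigenvalue tends to 0, the mixture log-likelihood tends to -∞. -/
theorem stmt8 {p G n : ℕ} (hp : 0 < p) (hG : 0 < G) (hn : 0 < n)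
    (γ : ℝ) (hγ : 1 ≤ γ) (x : Fin n → Fin p → ℝ)
    (hcard : G < (Set.range x).ncard)
    (w : ℕ → Fin G → ℝ) (μ : ℕ → Fin G → Fin p → ℝ)
    (S : ℕ → Fin G → Matrix (Fin p) (Fin p) ℝ)
    (hw : ∀ m j, 0 ≤ w m j) (hsum : ∀ m, ∑ j, w m j = 1)
    (hPD : ∀ m j, (S m j).PosDef)
    (hratio : ∀ m, (⨆ j, lamMax (S m j)) ≤ γ * ⨅ j, lamMin (S m j))
    (j : Fin G) (lam : ℕ → ℝ)
    (hmem : ∀ m, lam m ∈ spectrum ℝ (S m j))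
    (hto : Tendsto lam atTop (nhds 0)) :
    Tendsto
      (fun m => (1 / n : ℝ) * ∑ i, Real.log (∑ j', w m j' * gauss (x i) (μ m j') (S m j')))
      atTop atBot := by
  obtain ⟨ε, hε, hfar⟩ := exists_pos_forall_exists_le_dist (ι := Fin G) (s := Set.range x)
    (by rwa [Nat.card_fin])
  have : Nonempty (Fin G) := ⟨⟨0, hG⟩⟩
  set a : ℕ → ℝ := fun m => ⨅ j', lamMin (S m j')
  have ha_pos (m : ℕ) : 0 < a m := by
    obtain ⟨j', hj'⟩ := exists_eq_ciInf_of_finite (f := fun j' => lamMin (S m j'))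
    rw [show a m = _ from hj'.symm]
    exact (hPD m j').lamMin_pos hp
  have hlo (m : ℕ) (j' : Fin G) (r : ℝ) (hr : r ∈ spectrum ℝ (S m j')) : a m ≤ r :=
    (ciInf_le (Set.finite_range _).bddBelow j').trans (lamMin_le_of_mem_spectrum hr)
  have hhi (m : ℕ) (j' : Fin G) (r : ℝ) (hr : r ∈ spectrum ℝ (S m j')) : r ≤ γ * a m :=
    (le_lamMax_of_mem_spectrum hr).trans
      ((le_ciSup (Set.finite_range _).bddAbove j').trans (hratio m))
  have ha_lim : Tendsto a atTop (𝓝[>] 0) :=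
    tendsto_nhdsWithin_of_tendsto_nhds_of_eventually_within _
      (tendsto_of_tendsto_of_tendsto_of_le_of_le tendsto_const_nhds hto (fun m => (ha_pos m).le)
        fun m => hlo m j _ (hmem m))
      (Eventually.of_forall ha_pos)
  have hbound (m : ℕ) : mixtureLogLik (w m) (μ m) (S m) x ≤
      -(p / 2) * Real.log (2 * π) + (-(p / 2) * Real.log (a m) - ε ^ 2 / (2 * γ * n) / a m) := by
    obtain ⟨_, ⟨i₀, rfl⟩, hi₀⟩ := hfar (μ m)
    exact mixtureLogLik_le (hw m) (hsum m) (hPD m) hn (ha_pos m) (by linarith) (hlo m) (hhi m)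
      hε.le hi₀
  exact tendsto_atBot_mono hbound <| tendsto_atBot_add_const_left _ _ <|
    (Real.tendsto_mul_log_sub_div_nhdsGT_zero _ (by positivity)).comp ha_lim
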